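/- Let $\{a_n\},\{b_n\}$ be sequences of positive integers and $\{c_n\},\{d_n\}$ real sequences with $a_n\le b_n$, and $\psi:\mathbb{N}\to[0,\infty)$. If $\sum_{n\in\mathbb{N}}\psi(n)\log\frac{1}{\psi(n)}+\sum_{n\in\mathbb{N}}\gcd(a_n,b_n)(\psi(n)/(a_nb_n))^{1/2}<\infty$, then $\lambda(M(\psi))=0$, where $M(\psi)=\{x\in[0,1]:\|a_nx+c_n\|\cdot\|b_nx+d_n\|<\psi(n)\text{ for infinitely many }n\}$. -/

import Mathlib

/-!
By Borel–Cantelli it suffices to bound the measure of the `n`-th set by a quantity that the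
hypotheses make summable. Split that set dyadically according to `‖a x + c‖ ≈ 2⁻ʲ`, which
forces `‖b x + d‖ < 4 ψ 2ʲ`. Each point with `‖a x + c‖ < δ`, `‖b x + d‖ < ε` lies in an interval
of length `min (2δ/a) (2ε/b)` attached to a lattice point `(m, k)` with
`|b m - a k - (b c - a d)| < b δ + a ε`. The values `b m - a k` are multiples of `gcd a b`, and
each value is taken at most `4 gcd a b` times for `m` in a window of length `≈ a`, so there are
`O(b δ + a ε + gcd a b)` such points. Summing over `j` gives `O(ψ log (1/ψ))` from the first term
and `O(gcd a b · √(ψ / (a b)))` from the second.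
-/

open Set MeasureTheory

/-- Distance from `x` to the nearest integer. -/
noncomputable def nint (x : ℝ) : ℝ := |x - round x|

/-- `log` with the convention that `log x = 1` for `x ≤ e`. -/
noncomputable def clog (x : ℝ) : ℝ := max 1 (Real.log x)

lemma nint_nonneg (x : ℝ) : 0 ≤ nint x := abs_nonneg _

lemma nint_le_half (x : ℝ) : nint x ≤ 1 / 2 := abs_sub_round x

lemma card_Icc_ceil_floor_le {u v : ℝ} (huv : u ≤ v + 1) :
    ((Finset.Icc ⌈u⌉ ⌊v⌋).card : ℝ) ≤ v - u + 1 := by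
  rcases le_or_gt ⌈u⌉ (⌊v⌋ + 1) with h | h
  · have hcard : ((Finset.Icc ⌈u⌉ ⌊v⌋).card : ℝ) = ⌊v⌋ + 1 - ⌈u⌉ := by
      exact_mod_cast Int.card_Icc_of_le _ _ h
    rw [hcard]
    linarith [Int.floor_le v, Int.le_ceil u]
  · rw [Finset.Icc_eq_empty (by omega), Finset.card_empty, Nat.cast_zero]
    linarith

lemma card_le_of_dvd_sub {T : Finset ℤ} {s : ℕ} (hs : 0 < s) {u v : ℝ} (huv : u ≤ v)
    (hT : ∀ x ∈ T, u ≤ x ∧ (x : ℝ) ≤ v) (hdvd : ∀ x ∈ T, ∀ y ∈ T, (s : ℤ) ∣ x - y) :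
    (T.card : ℝ) ≤ (v - u) / s + 1 := by
  have hs' : (0 : ℝ) < s := by exact_mod_cast hs
  rcases T.eq_empty_or_nonempty with rfl | ⟨x₀, hx₀⟩
  · simp only [Finset.card_empty, Nat.cast_zero]
    have : 0 ≤ (v - u) / s := div_nonneg (by linarith) hs'.le
    linarith
  -- `x ↦ (x - x₀) / s` is exact division on `T`, hence injective
  have hmul : ∀ x ∈ T, (s : ℤ) * ((x - x₀) / s) = x - x₀ :=
    fun x hx => Int.mul_ediv_cancel' (hdvd x hx x₀ hx₀)
  have hmaps : Set.MapsTo (fun x => (x - x₀) / (s : ℤ)) T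
      (Finset.Icc ⌈(u - x₀) / s⌉ ⌊(v - x₀) / s⌋) := by
    intro x hx
    have hq : (s : ℝ) * (((x - x₀) / s : ℤ) : ℝ) = x - x₀ := by exact_mod_cast hmul x hx
    obtain ⟨hux, hxv⟩ := hT x hx
    simp only [Finset.coe_Icc, Set.mem_Icc, Int.ceil_le, Int.le_floor]
    constructor
    · rw [div_le_iff₀ hs']; linarith
    · rw [le_div_iff₀ hs']; linarith
  have hinj : Set.InjOn (fun x => (x - x₀) / (s : ℤ)) T := by
    intro x hx y hy hxy
    have := hmul x hx
    have := hmul y hy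
    simp only at hxy
    rw [hxy] at *
    omega
  have hcard := Finset.card_le_card_of_injOn _ hmaps hinj
  obtain ⟨hux₀, hx₀v⟩ := hT x₀ hx₀
  have hwin := card_Icc_ceil_floor_le (u := (u - x₀) / s) (v := (v - x₀) / s) (by
    rw [← sub_nonneg, div_add_one hs'.ne', ← sub_div]
    exact div_nonneg (by linarith) hs'.le)
  calc (T.card : ℝ) ≤ (Finset.Icc ⌈(u - x₀) / s⌉ ⌊(v - x₀) / s⌋).card := by exact_mod_cast hcard
    _ ≤ (v - x₀) / s - (u - x₀) / s + 1 := hwin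
    _ = (v - u) / s + 1 := by ring

lemma div_gcd_dvd_of_mul_eq {a b : ℕ} (ha : 0 < a) {x y : ℤ} (h : (b : ℤ) * x = a * y) :
    ((a / Nat.gcd a b : ℕ) : ℤ) ∣ x := by
  have hg : Nat.gcd a b ≠ 0 := (Nat.gcd_pos_of_pos_left b ha).ne'
  -- Bézout: `gcd a b * x = a * (gcdA * x + gcdB * y)`
  have hbez : (a : ℤ) ∣ Nat.gcd a b * x := by
    refine ⟨Nat.gcdA a b * x + Nat.gcdB a b * y, ?_⟩
    rw [Nat.gcd_eq_gcd_ab]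
    linear_combination Nat.gcdB a b * h
  have ha' : ((a / Nat.gcd a b : ℕ) : ℤ) * Nat.gcd a b = a := by
    exact_mod_cast Nat.div_mul_cancel (Nat.gcd_dvd_left a b)
  rw [← ha', mul_comm _ x] at hbez
  exact (mul_dvd_mul_iff_right (by exact_mod_cast hg)).mp hbez

lemma card_filter_abs_sub_lt_le {a : ℕ} (ha : 0 < a) (b : ℕ) {u v θ r : ℝ} (huv : u ≤ v)
    (hr : 0 ≤ r) (M K : Finset ℤ) (hM : ∀ m ∈ M, u ≤ m ∧ (m : ℝ) ≤ v) :
    ((M ×ˢ K).filter (fun p : ℤ × ℤ => |((b * p.1 - a * p.2 : ℤ) : ℝ) - θ| < r)).card ≤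
      (2 * r / Nat.gcd a b + 1) * ((v - u) * Nat.gcd a b / a + 1) := by
  classical
  set g := Nat.gcd a b
  have hg : 0 < g := Nat.gcd_pos_of_pos_left b ha
  set f : ℤ × ℤ → ℤ := fun p => b * p.1 - a * p.2 with hf
  set P := (M ×ˢ K).filter (fun p : ℤ × ℤ => |((f p : ℤ) : ℝ) - θ| < r)
  have hfiber : ∀ t, ((P.filter (f · = t)).card : ℝ) ≤ (v - u) * g / a + 1 := by
    intro t
    set F := P.filter (f · = t)
    have hinj : Set.InjOn Prod.fst (F : Set (ℤ × ℤ)) := by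
      intro p hp q hq hpq
      have hfp := (Finset.mem_filter.mp hp).2
      have hfq := (Finset.mem_filter.mp hq).2
      simp only [hf] at hfp hfq hpq
      have : (a : ℤ) * p.2 = a * q.2 := by rw [hpq] at hfp; omega
      exact Prod.ext hpq (mul_left_cancel₀ (by exact_mod_cast ha.ne') this)
    have hdiv : 0 < a / g := Nat.div_pos (Nat.le_of_dvd ha (Nat.gcd_dvd_left a b)) hg
    have hcount := card_le_of_dvd_sub (T := F.image Prod.fst) hdiv huv
      (fun m hm => by
        obtain ⟨p, hp, rfl⟩ := Finset.mem_image.mp hm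
        exact hM p.1 (Finset.mem_product.mp (Finset.mem_filter.mp (Finset.mem_filter.mp hp).1).1).1)
      (fun m hm m' hm' => by
        obtain ⟨p, hp, rfl⟩ := Finset.mem_image.mp hm
        obtain ⟨q, hq, rfl⟩ := Finset.mem_image.mp hm'
        have hfp := (Finset.mem_filter.mp hp).2
        have hfq := (Finset.mem_filter.mp hq).2
        exact div_gcd_dvd_of_mul_eq ha (y := p.2 - q.2) (by linear_combination hfp - hfq))
    rw [Finset.card_image_of_injOn hinj] at hcount
    rwa [Nat.cast_div (Nat.gcd_dvd_left a b) (by exact_mod_cast hg.ne'), div_div_eq_mul_div]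
      at hcount
  have himage : ((P.image f).card : ℝ) ≤ 2 * r / g + 1 := by
    have hgf : ∀ p, (g : ℤ) ∣ f p := fun p =>
      dvd_sub (dvd_mul_of_dvd_left (by exact_mod_cast Nat.gcd_dvd_right a b) _)
        (dvd_mul_of_dvd_left (by exact_mod_cast Nat.gcd_dvd_left a b) _)
    have hcount := card_le_of_dvd_sub (T := P.image f) hg (u := θ - r) (v := θ + r)
      (by linarith)
      (fun t ht => by
        obtain ⟨p, hp, rfl⟩ := Finset.mem_image.mp ht
        have := abs_sub_lt_iff.mp (Finset.mem_filter.mp hp).2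
        constructor <;> linarith)
      (fun t ht t' ht' => by
        obtain ⟨p, -, rfl⟩ := Finset.mem_image.mp ht
        obtain ⟨q, -, rfl⟩ := Finset.mem_image.mp ht'
        exact dvd_sub (hgf p) (hgf q))
    convert hcount using 2
    ring
  rw [Finset.card_eq_sum_card_image f P, Nat.cast_sum]
  calc ∑ t ∈ P.image f, ((P.filter (f · = t)).card : ℝ)
      ≤ ∑ _t ∈ P.image f, ((v - u) * g / a + 1) := Finset.sum_le_sum fun t _ => hfiber t
    _ = (P.image f).card * ((v - u) * g / a + 1) := by rw [Finset.sum_const, nsmul_eq_mul]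
    _ ≤ (2 * r / g + 1) * ((v - u) * g / a + 1) :=
        mul_le_mul_of_nonneg_right himage (by positivity)

lemma exists_abs_sub_lt_of_nint_lt {a : ℕ} {c δ x : ℝ} (hx : x ∈ Icc (0 : ℝ) 1)
    (h : nint (a * x + c) < δ) :
    ∃ m ∈ Finset.Icc ⌈c - δ⌉ ⌊a + c + δ⌋, |a * x + c - m| < δ := by
  refine ⟨round (a * x + c), ?_, h⟩
  have hax : 0 ≤ (a : ℝ) * x := mul_nonneg (Nat.cast_nonneg a) hx.1
  have hxa : (a : ℝ) * x ≤ a := mul_le_of_le_one_right (Nat.cast_nonneg a) hx.2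
  have := abs_sub_lt_iff.mp h
  rw [Finset.mem_Icc, Int.ceil_le, Int.le_floor]
  constructor <;> linarith

lemma card_Icc_ceil_floor_window_le (a : ℕ) (c : ℝ) {δ : ℝ} (hδ : 0 ≤ δ) :
    ((Finset.Icc ⌈c - δ⌉ ⌊a + c + δ⌋).card : ℝ) ≤ a + 2 * δ + 1 := by
  have ha : (0 : ℝ) ≤ a := Nat.cast_nonneg a
  have := card_Icc_ceil_floor_le (u := c - δ) (v := a + c + δ) (by linarith)
  linarith

lemma volume_abs_mul_add_sub_lt {a : ℝ} (ha : 0 < a) (c m δ : ℝ) :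
    volume {x : ℝ | |a * x + c - m| < δ} = ENNReal.ofReal (2 * δ / a) := by
  have hset : {x : ℝ | |a * x + c - m| < δ} = Ioo ((m - c - δ) / a) ((m - c + δ) / a) := by
    ext x
    simp only [mem_ofPred_eq, mem_Ioo, abs_sub_lt_iff, div_lt_iff₀ ha, lt_div_iff₀ ha]
    constructor <;> rintro ⟨h₁, h₂⟩ <;> constructor <;> linarith
  rw [hset, Real.volume_Ioo]
  congr 1
  ring

lemma measure_biUnion_finset_le_card_mul {ι α : Type*} [MeasurableSpace α] {μ : Measure α}
    (s : Finset ι) (t : ι → Set α) {C : ℝ} (h : ∀ i ∈ s, μ (t i) ≤ ENNReal.ofReal C) :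
    μ (⋃ i ∈ s, t i) ≤ ENNReal.ofReal (s.card * C) := by
  calc μ (⋃ i ∈ s, t i) ≤ ∑ i ∈ s, μ (t i) := measure_biUnion_finset_le s t
    _ ≤ ∑ _i ∈ s, ENNReal.ofReal C := Finset.sum_le_sum h
    _ = ENNReal.ofReal (s.card * C) := by
        rw [Finset.sum_const, nsmul_eq_mul, ENNReal.ofReal_mul (Nat.cast_nonneg _),
          ENNReal.ofReal_natCast]

lemma volume_nint_lt_le {a : ℕ} (ha : 0 < a) (c : ℝ) {δ : ℝ} (hδ : 0 ≤ δ) (hδ1 : δ ≤ 1) :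
    volume {x ∈ Icc (0 : ℝ) 1 | nint (a * x + c) < δ} ≤ ENNReal.ofReal (8 * δ) := by
  have ha' : (1 : ℝ) ≤ a := by exact_mod_cast ha
  set M := Finset.Icc ⌈c - δ⌉ ⌊a + c + δ⌋
  have hcover : {x ∈ Icc (0 : ℝ) 1 | nint (a * x + c) < δ} ⊆
      ⋃ m ∈ M, {x : ℝ | |a * x + c - m| < δ} := by
    rintro x ⟨hx, hδx⟩
    obtain ⟨m, hm, hxm⟩ := exists_abs_sub_lt_of_nint_lt hx hδx
    exact mem_biUnion hm hxm
  refine (measure_mono hcover).trans <| (measure_biUnion_finset_le_card_mul M _ fun m _ =>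
    (volume_abs_mul_add_sub_lt (by positivity) c m δ).le).trans <| ENNReal.ofReal_le_ofReal ?_
  calc (M.card : ℝ) * (2 * δ / a) ≤ (a + 3) * (2 * δ / a) := by
        gcongr
        linarith [card_Icc_ceil_floor_window_le a c hδ]
    _ = 2 * δ + 6 * δ / a := by field_simp; ring
    _ ≤ 8 * δ := by
        have : 6 * δ / a ≤ 6 * δ := div_le_self (by positivity) ha'
        linarith

lemma abs_sub_lt_of_abs_mul_add_sub_lt {a b : ℕ} {c d x δ ε : ℝ} {m k : ℤ} (ha : 0 < a) (hb : 0 < b)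
    (hm : |a * x + c - m| < δ) (hk : |b * x + d - k| < ε) :
    |((b * m - a * k : ℤ) : ℝ) - (b * c - a * d)| < b * δ + a * ε := by
  have h : ((b * m - a * k : ℤ) : ℝ) - (b * c - a * d) =
      a * (b * x + d - k) - b * (a * x + c - m) := by
    push_cast
    ring
  rw [h]
  calc |a * (b * x + d - k) - b * (a * x + c - m)|
      ≤ a * |b * x + d - k| + b * |a * x + c - m| := by
        refine (abs_sub _ _).trans (le_of_eq ?_)
        rw [abs_mul, abs_mul, Nat.abs_cast, Nat.abs_cast]
    _ < b * δ + a * ε := by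
        have ha' : (0 : ℝ) < a := by exact_mod_cast ha
        have hb' : (0 : ℝ) < b := by exact_mod_cast hb
        nlinarith

lemma volume_nint_lt_and_nint_lt_le {a b : ℕ} (ha : 0 < a) (hb : 0 < b) (c d : ℝ) {δ ε : ℝ}
    (hδ : 0 ≤ δ) (hδ1 : δ ≤ 1) (hε : 0 ≤ ε) :
    volume {x ∈ Icc (0 : ℝ) 1 | nint (a * x + c) < δ ∧ nint (b * x + d) < ε} ≤
      ENNReal.ofReal (32 * δ * ε + 4 * Nat.gcd a b * min (2 * δ / a) (2 * ε / b)) := by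
  classical
  have ha' : (1 : ℝ) ≤ a := by exact_mod_cast ha
  have hb' : (1 : ℝ) ≤ b := by exact_mod_cast hb
  set g := Nat.gcd a b
  have hg : (1 : ℝ) ≤ g := by exact_mod_cast Nat.gcd_pos_of_pos_left b ha
  have hga : (g : ℝ) ≤ a := by exact_mod_cast Nat.le_of_dvd ha (Nat.gcd_dvd_left a b)
  set L := min (2 * δ / a) (2 * ε / b)
  have hL : 0 ≤ L := le_min (by positivity) (by positivity)
  set M := Finset.Icc ⌈c - δ⌉ ⌊a + c + δ⌋
  set K := Finset.Icc ⌈d - ε⌉ ⌊b + d + ε⌋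
  set r := b * δ + a * ε
  set P := (M ×ˢ K).filter
    (fun p : ℤ × ℤ => |((b * p.1 - a * p.2 : ℤ) : ℝ) - (b * c - a * d)| < r)
  have hcover : {x ∈ Icc (0 : ℝ) 1 | nint (a * x + c) < δ ∧ nint (b * x + d) < ε} ⊆
      ⋃ p ∈ P, {x : ℝ | |a * x + c - p.1| < δ} ∩ {x : ℝ | |b * x + d - p.2| < ε} := by
    rintro x ⟨hx, hδx, hεx⟩
    obtain ⟨m, hm, hxm⟩ := exists_abs_sub_lt_of_nint_lt hx hδx
    obtain ⟨k, hk, hxk⟩ := exists_abs_sub_lt_of_nint_lt hx hεx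
    refine mem_biUnion (x := (m, k)) (Finset.mem_filter.mpr ⟨Finset.mem_product.mpr ⟨hm, hk⟩, ?_⟩)
      ⟨hxm, hxk⟩
    exact abs_sub_lt_of_abs_mul_add_sub_lt ha hb hxm hxk
  have hpiece : ∀ p ∈ P, volume ({x : ℝ | |a * x + c - p.1| < δ} ∩
      {x : ℝ | |b * x + d - p.2| < ε}) ≤ ENNReal.ofReal L := fun p _ => by
    rw [ENNReal.ofReal_min, ← volume_abs_mul_add_sub_lt (by positivity) c p.1,
      ← volume_abs_mul_add_sub_lt (by positivity) d p.2]
    exact le_min (measure_mono inter_subset_left) (measure_mono inter_subset_right)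
  have hcard : (P.card : ℝ) ≤ 8 * r + 4 * g := by
    have hP := card_filter_abs_sub_lt_le ha b (u := c - δ) (v := a + c + δ)
      (θ := b * c - a * d) (r := r) (by linarith) (by positivity) M K fun m hm => by
        rw [Finset.mem_Icc] at hm
        exact ⟨(Int.le_ceil _).trans (by exact_mod_cast hm.1),
          (Int.cast_le.mpr hm.2).trans (Int.floor_le _)⟩
    have hfiber : (a + c + δ - (c - δ)) * g / a + 1 ≤ 4 * g := by
      rw [div_add_one (by positivity), div_le_iff₀ (by positivity)]
      nlinarith
    calc (P.card : ℝ) ≤ (2 * r / g + 1) * (4 * g) := hP.trans (by gcongr)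
      _ = 8 * r + 4 * g := by field_simp; ring
  have hrL : r * L ≤ 4 * δ * ε := by
    have h₁ : b * δ * L ≤ b * δ * (2 * ε / b) := by gcongr; exact min_le_right _ _
    have h₂ : a * ε * L ≤ a * ε * (2 * δ / a) := by gcongr; exact min_le_left _ _
    have h₃ : b * δ * (2 * ε / b) + a * ε * (2 * δ / a) = 4 * δ * ε := by field_simp; ring
    nlinarith
  refine (measure_mono hcover).trans <| (measure_biUnion_finset_le_card_mul P _ hpiece).trans <|
    ENNReal.ofReal_le_ofReal ?_
  nlinarith

lemma exists_lt_inv_two_pow_and_lt_two_pow {t s ψ : ℝ} (ht : 0 < t) (ht' : t ≤ 1 / 2)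
    (hs : 0 ≤ s) (h : t * s < ψ) : ∃ j : ℕ, t < 2⁻¹ ^ j ∧ s < 4 * ψ * 2 ^ j := by
  obtain ⟨j, hj₁, hj₂⟩ := exists_nat_pow_near (x := 1 / (2 * t)) (y := (2 : ℝ))
    (by rw [le_div_iff₀ (by positivity)]; linarith) one_lt_two
  rw [le_div_iff₀ (by positivity)] at hj₁
  rw [div_lt_iff₀ (by positivity), pow_succ] at hj₂
  have h2j : (0 : ℝ) < 2 ^ j := by positivity
  refine ⟨j, ?_, ?_⟩
  · rw [inv_pow, ← one_div, lt_div_iff₀ h2j]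
    linarith
  · by_contra! hs'
    nlinarith [mul_le_mul_of_nonneg_left hs' ht.le]

lemma tsum_min_le_sum_add_tsum {x y : ℕ → ℝ} (hx : Summable x) (hx0 : ∀ j, 0 ≤ x j)
    (hy0 : ∀ j, 0 ≤ y j) (N : ℕ) :
    ∑' j, min (x j) (y j) ≤ ∑ j ∈ Finset.range N, y j + ∑' j, x (j + N) := by
  have hmin : Summable fun j => min (x j) (y j) :=
    hx.of_nonneg_of_le (fun j => le_min (hx0 j) (hy0 j)) fun j => min_le_left _ _
  rw [← hmin.sum_add_tsum_nat_add N]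
  gcongr with j _ j
  · exact min_le_right _ _
  · exact (summable_nat_add_iff N).mpr hmin
  · exact (summable_nat_add_iff N).mpr hx
  · exact min_le_left _ _

lemma tsum_inv_two_pow_add (N : ℕ) : ∑' j : ℕ, (2⁻¹ : ℝ) ^ (j + N) = 2 * 2⁻¹ ^ N := by
  simp_rw [pow_add, tsum_mul_right, tsum_geometric_inv_two]

lemma tsum_min_inv_two_pow_le {ψ : ℝ} (hψ : 0 < ψ) :
    ∑' j : ℕ, min ((2⁻¹ : ℝ) ^ j) ψ ≤ 6 * ψ * clog (1 / ψ) := by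
  obtain ⟨N, hN₁, hN₂⟩ := exists_nat_pow_near (le_max_left 1 (1 / ψ)) one_lt_two
  have hclog : 1 ≤ clog (1 / ψ) := le_max_left _ _
  have htail : 2 * (2⁻¹ : ℝ) ^ N ≤ 4 * ψ := by
    have : 1 / ψ < 2 ^ (N + 1) := (le_max_right _ _).trans_lt hN₂
    rw [div_lt_iff₀ hψ, pow_succ] at this
    rw [inv_pow, ← div_eq_mul_inv, div_le_iff₀ (by positivity)]
    linarith
  have hN : (N : ℝ) ≤ 2 * clog (1 / ψ) := by
    have hlog : N * Real.log 2 ≤ clog (1 / ψ) := by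
      rw [← Real.log_pow]
      refine (Real.log_le_log (by positivity) hN₁).trans ?_
      rcases le_total 1 (1 / ψ) with h | h
      · rw [max_eq_right h]; exact le_max_right _ _
      · rw [max_eq_left h, Real.log_one]; linarith
    nlinarith [Real.log_two_gt_d9]
  calc ∑' j : ℕ, min ((2⁻¹ : ℝ) ^ j) ψ
      ≤ ∑ _j ∈ Finset.range N, ψ + ∑' j : ℕ, (2⁻¹ : ℝ) ^ (j + N) :=
        tsum_min_le_sum_add_tsum (summable_geometric_of_lt_one (by norm_num) (by norm_num))
          (fun j => by positivity) (fun _ => hψ.le) N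
    _ ≤ 6 * ψ * clog (1 / ψ) := by
        rw [Finset.sum_const, Finset.card_range, nsmul_eq_mul, tsum_inv_two_pow_add]
        nlinarith

lemma tsum_min_inv_two_pow_two_pow_le {A B : ℝ} (hA : 0 < A) (hB : 0 < B) :
    ∑' j : ℕ, min (A * 2⁻¹ ^ j) (B * 2 ^ j) ≤ 5 * √(A * B) := by
  set α := √A
  set β := √B
  have hα : 0 < α := Real.sqrt_pos.mpr hA
  have hβ : 0 < β := Real.sqrt_pos.mpr hB
  have hAα : A = α * α := (Real.mul_self_sqrt hA.le).symm
  have hBβ : B = β * β := (Real.mul_self_sqrt hB.le).symm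
  have hAB : √(A * B) = α * β := Real.sqrt_mul hA.le B
  -- split where the two geometric sequences cross, i.e. at `2 ^ N ≈ α / β`
  obtain ⟨N, hN₁, hN₂⟩ := exists_nat_pow_near (le_max_left 1 (α / β)) one_lt_two
  have hhead : B * (2 ^ N - 1) ≤ α * β := by
    have : (2 : ℝ) ^ N - 1 ≤ α / β := by
      rcases le_total 1 (α / β) with h | h
      · rw [max_eq_right h] at hN₁; linarith
      · rw [max_eq_left h] at hN₁; linarith [div_pos hα hβ]
    rw [le_div_iff₀ hβ] at this
    rw [hBβ]
    nlinarith
  have htail : A * (2 * 2⁻¹ ^ N) ≤ 4 * (α * β) := by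
    have : α / β < 2 ^ (N + 1) := (le_max_right _ _).trans_lt hN₂
    rw [div_lt_iff₀ hβ, pow_succ] at this
    have h2N : (2 : ℝ)⁻¹ ^ N * 2 ^ N = 1 := by rw [← mul_pow]; norm_num
    have := mul_lt_mul_of_pos_left this (by positivity : (0 : ℝ) < α * 2⁻¹ ^ N * 2)
    rw [hAα]
    linear_combination this.le + 4 * α * β * h2N
  calc ∑' j : ℕ, min (A * 2⁻¹ ^ j) (B * 2 ^ j)
      ≤ ∑ j ∈ Finset.range N, B * 2 ^ j + ∑' j : ℕ, A * 2⁻¹ ^ (j + N) :=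
        tsum_min_le_sum_add_tsum
          ((summable_geometric_of_lt_one (by norm_num) (by norm_num)).mul_left A)
          (fun j => by positivity) (fun j => by positivity) N
    _ = B * (2 ^ N - 1) + A * (2 * 2⁻¹ ^ N) := by
        rw [← Finset.mul_sum, tsum_mul_left, tsum_inv_two_pow_add, geom_sum_eq (by norm_num)]
        norm_num
    _ ≤ 5 * √(A * B) := by rw [hAB]; linarith

lemma volume_nint_lt_inv_two_pow_and_nint_lt_le {a b : ℕ} (ha : 0 < a) (hb : 0 < b) (c d : ℝ)
    {ψ : ℝ} (hψ : 0 ≤ ψ) (j : ℕ) :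
    volume {x ∈ Icc (0 : ℝ) 1 | nint (a * x + c) < 2⁻¹ ^ j ∧ nint (b * x + d) < 4 * ψ * 2 ^ j} ≤
      ENNReal.ofReal (128 * min (2⁻¹ ^ j) ψ +
        4 * Nat.gcd a b * min ((2 : ℝ) / a * 2⁻¹ ^ j) (8 * ψ / b * 2 ^ j)) := by
  have hδ : (0 : ℝ) ≤ 2⁻¹ ^ j := by positivity
  have hδ1 : (2⁻¹ : ℝ) ^ j ≤ 1 := pow_le_one₀ (by norm_num) (by norm_num)
  have hL : 0 ≤ 4 * (Nat.gcd a b : ℝ) * min ((2 : ℝ) / a * 2⁻¹ ^ j) (8 * ψ / b * 2 ^ j) :=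
    mul_nonneg (by positivity) (le_min (by positivity) (by positivity))
  rcases le_total ((2⁻¹ : ℝ) ^ j) ψ with h | h
  · refine (measure_mono (t := {x ∈ Icc (0 : ℝ) 1 | nint (a * x + c) < 2⁻¹ ^ j})
      fun x hx => ⟨hx.1, hx.2.1⟩).trans <|
      (volume_nint_lt_le ha c hδ hδ1).trans (ENNReal.ofReal_le_ofReal ?_)
    rw [min_eq_left h]
    linarith
  · refine (volume_nint_lt_and_nint_lt_le ha hb c d hδ hδ1 (by positivity)).trans
      (ENNReal.ofReal_le_ofReal (le_of_eq ?_))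
    have h2j : (2⁻¹ : ℝ) ^ j * 2 ^ j = 1 := by rw [← mul_pow]; norm_num
    rw [min_eq_right h]
    congr 1
    · linear_combination 128 * ψ * h2j
    · congr 2 <;> ring

lemma volume_nint_mul_nint_lt_le {a b : ℕ} (ha : 0 < a) (hb : 0 < b) (c d : ℝ) {ψ : ℝ}
    (hψ : 0 < ψ) :
    volume {x ∈ Icc (0 : ℝ) 1 | nint (a * x + c) * nint (b * x + d) < ψ} ≤
      ENNReal.ofReal (768 * (ψ * clog (1 / ψ)) + 80 * (Nat.gcd a b * √(ψ / (a * b)))) := by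
  have ha' : (0 : ℝ) < a := by exact_mod_cast ha
  set g : ℝ := (Nat.gcd a b : ℝ)
  set B : ℕ → Set ℝ := fun j =>
    {x ∈ Icc (0 : ℝ) 1 | nint (a * x + c) < 2⁻¹ ^ j ∧ nint (b * x + d) < 4 * ψ * 2 ^ j}
  set u₁ : ℕ → ℝ := fun j => min ((2⁻¹ : ℝ) ^ j) ψ
  set u₂ : ℕ → ℝ := fun j => min ((2 : ℝ) / a * 2⁻¹ ^ j) (8 * ψ / b * 2 ^ j)
  have hgeo : Summable fun j : ℕ => (2⁻¹ : ℝ) ^ j :=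
    summable_geometric_of_lt_one (by norm_num) (by norm_num)
  have hu₁ : Summable u₁ :=
    hgeo.of_nonneg_of_le (fun j => le_min (by positivity) hψ.le) fun j => min_le_left _ _
  have hu₂ : Summable u₂ := (hgeo.mul_left ((2 : ℝ) / a)).of_nonneg_of_le
    (fun j => le_min (by positivity) (by positivity)) fun j => min_le_left _ _
  -- dyadic decomposition according to the size of `nint (a * x + c)`, which vanishes only on
  -- the countable set `(ℤ - c) / a`
  have hcover : {x ∈ Icc (0 : ℝ) 1 | nint (a * x + c) * nint (b * x + d) < ψ} ⊆
      range (fun m : ℤ => (m - c) / a) ∪ ⋃ j, B j := by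
    rintro x ⟨hx, hψx⟩
    rcases (nint_nonneg (a * x + c)).eq_or_lt with h | h
    · refine Or.inl ⟨round (a * x + c), ?_⟩
      have : a * x + c = round (a * x + c) := by
        linarith [abs_eq_zero.mp (h.symm : nint (a * x + c) = 0)]
      field_simp
      linarith
    · obtain ⟨j, hj₁, hj₂⟩ := exists_lt_inv_two_pow_and_lt_two_pow h (nint_le_half _)
        (nint_nonneg _) hψx
      exact Or.inr (mem_iUnion.mpr ⟨j, hx, hj₁, hj₂⟩)
  have hsqrt : √(2 / a * (8 * ψ / b)) = 4 * √(ψ / (a * b)) := by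
    rw [show 2 / a * (8 * ψ / b) = 4 ^ 2 * (ψ / (a * b)) by field_simp; ring,
      Real.sqrt_mul (by positivity), Real.sqrt_sq (by norm_num)]
  calc volume {x ∈ Icc (0 : ℝ) 1 | nint (a * x + c) * nint (b * x + d) < ψ}
      ≤ volume (⋃ j, B j) :=
        (measure_mono hcover).trans <| (measure_union_le _ _).trans_eq <| by
          rw [(countable_range _).measure_zero, zero_add]
    _ ≤ ∑' j, volume (B j) := measure_iUnion_le B
    _ ≤ ∑' j, ENNReal.ofReal (128 * u₁ j + 4 * g * u₂ j) := ENNReal.tsum_le_tsum fun j =>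
        volume_nint_lt_inv_two_pow_and_nint_lt_le ha hb c d hψ.le j
    _ = ENNReal.ofReal (128 * ∑' j, u₁ j + 4 * g * ∑' j, u₂ j) := by
        rw [← ENNReal.ofReal_tsum_of_nonneg (fun j => by positivity)
          ((hu₁.mul_left 128).add (hu₂.mul_left (4 * g))),
          (hu₁.mul_left 128).tsum_add (hu₂.mul_left (4 * g)), tsum_mul_left, tsum_mul_left]
    _ ≤ ENNReal.ofReal (768 * (ψ * clog (1 / ψ)) + 80 * (g * √(ψ / (a * b)))) := by
        gcongr ENNReal.ofReal ?_
        have h₁ : ∑' j, u₁ j ≤ 6 * ψ * clog (1 / ψ) := tsum_min_inv_two_pow_le hψ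
        have h₂ : ∑' j, u₂ j ≤ 5 * √(2 / a * (8 * ψ / b)) :=
          tsum_min_inv_two_pow_two_pow_le (by positivity) (by positivity)
        rw [hsqrt] at h₂
        nlinarith [mul_le_mul_of_nonneg_left h₂ (Nat.cast_nonneg _ : 0 ≤ g)]

lemma measure_setOf_infinite_eq_zero {α : Type*} [MeasurableSpace α] {μ : Measure α}
    {s : ℕ → Set α} {u : ℕ → ℝ} (hu : Summable u) (h : ∀ n, μ (s n) ≤ ENNReal.ofReal (u n)) :
    μ {x | {n | x ∈ s n}.Infinite} = 0 := by
  have hfin : ∑' n, μ (s n) ≠ ⊤ :=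
    ne_top_of_le_ne_top (ENNReal.tsum_coe_ne_top_iff_summable.mpr hu.toNNReal)
      (ENNReal.tsum_le_tsum h)
  simpa only [Nat.frequently_atTop_iff_infinite] using
    measure_setOfPred_frequently_eq_zero (μ := μ) (p := fun n x => x ∈ s n) hfin

theorem stmt11 (a b : ℕ → ℕ) (c d : ℕ → ℝ) (ψ : ℕ → ℝ)
    (ha : ∀ n, 1 ≤ a n) (hab : ∀ n, a n ≤ b n) (hψ : ∀ n, 0 ≤ ψ n)
    (hsum1 : Summable (fun n => if 0 < ψ n then ψ n * clog (1 / ψ n) else 0))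
    (hsum2 : Summable (fun n =>
      (Nat.gcd (a n) (b n) : ℝ) * (ψ n / (a n * b n)) ^ ((1:ℝ) / 2))) :
    volume {x ∈ Icc (0:ℝ) 1 |
      {n : ℕ | nint (a n * x + c n) * nint (b n * x + d n) < ψ n}.Infinite} = 0 := by
  set E : ℕ → Set ℝ := fun n =>
    {x ∈ Icc (0 : ℝ) 1 | nint (a n * x + c n) * nint (b n * x + d n) < ψ n}
  have hE : ∀ n, volume (E n) ≤ ENNReal.ofReal
      (768 * (if 0 < ψ n then ψ n * clog (1 / ψ n) else 0) +
        80 * ((Nat.gcd (a n) (b n) : ℝ) * (ψ n / (a n * b n)) ^ ((1:ℝ) / 2))) := by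
    intro n
    rcases (hψ n).lt_or_eq with hpos | hzero
    · rw [if_pos hpos, ← Real.sqrt_eq_rpow]
      exact volume_nint_mul_nint_lt_le (ha n) ((ha n).trans (hab n)) (c n) (d n) hpos
    · have : E n = ∅ := eq_empty_of_forall_notMem fun x hx =>
        (hx.2.trans_le hzero.symm.le).not_ge (mul_nonneg (nint_nonneg _) (nint_nonneg _))
      simp [this]
  refine measure_mono_null ?_
    (measure_setOf_infinite_eq_zero ((hsum1.mul_left 768).add (hsum2.mul_left 80)) hE)
  rintro x ⟨hx, hinf⟩
  exact hinf.mono fun n hn => ⟨hx, hn⟩
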